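/- The automaton group of automaton 861 is non-contracting: the element c satisfies c(010) = 010, c|_{010} = c, and c has infinite order, hence no finite nucleus exists. -/

import Mathlib

namespace Stmt6


/-- A Mealy automaton over the binary alphabet with state set `S`. -/
structure Mealy (S : Type) where
  /-- transition function -/
  δ : S → Bool → S
  /-- output function -/
  τ : S → Bool → Bool

namespace Mealy

variable {S : Type} (M : Mealy S)

/-- The state reached from `q` after reading the first `n` letters of `w`. -/
def stateAt (q : S) (w : ℕ → Bool) : ℕ → S
  | 0 => q
  | n + 1 => M.δ (stateAt q w n) (w n)

/-- The action of state `q` on infinite words. -/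
def act (q : S) (w : ℕ → Bool) : ℕ → Bool :=
  fun n => M.τ (M.stateAt q w n) (w n)

/-- The inverse automaton (for automata whose output functions are involutions). -/
def inv : Mealy S := ⟨fun q b => M.δ q (M.τ q b), M.τ⟩

theorem stateAt_inv_act (h : ∀ q b, M.τ q (M.τ q b) = b) (q : S) (w : ℕ → Bool) :
    ∀ n, M.inv.stateAt q (M.act q w) n = M.stateAt q w n := by
  intro n
  induction n with
  | zero => rfl
  | succ n ih =>
    show M.inv.δ (M.inv.stateAt q (M.act q w) n) (M.act q w n) = M.δ (M.stateAt q w n) (w n)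
    rw [ih]
    show M.δ (M.stateAt q w n) (M.τ (M.stateAt q w n) (M.τ (M.stateAt q w n) (w n))) = _
    rw [h]

theorem inv_act (h : ∀ q b, M.τ q (M.τ q b) = b) (q : S) (w : ℕ → Bool) :
    M.inv.act q (M.act q w) = w := by
  funext n
  show M.inv.τ (M.inv.stateAt q (M.act q w) n) (M.act q w n) = w n
  rw [stateAt_inv_act M h]
  show M.τ (M.stateAt q w n) (M.τ (M.stateAt q w n) (w n)) = w n
  rw [h]

theorem inv_inv (h : ∀ q b, M.τ q (M.τ q b) = b) : M.inv.inv = M := by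
  obtain ⟨d, t⟩ := M
  simp only [inv]
  congr 1
  funext q b
  exact congrArg (d q) (h q b)

/-- The permutation of the set of infinite binary words defined by state `q`. -/
def perm (h : ∀ q b, M.τ q (M.τ q b) = b) (q : S) : Equiv.Perm (ℕ → Bool) where
  toFun := M.act q
  invFun := M.inv.act q
  left_inv := fun w => M.inv_act h q w
  right_inv := fun w => by
    have h2 : ∀ q b, M.inv.τ q (M.inv.τ q b) = b := h
    have := M.inv.inv_act h2 q w
    rwa [M.inv_inv h] at this

end Mealy

/-- Prepend a finite word to an infinite word. -/
def cat (u : List Bool) (w : ℕ → Bool) : ℕ → Bool :=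
  fun n => u.getD n (w (n - u.length))

/-- The (semantic) restriction of a transformation of infinite words to the
subtree indexed by the finite word `u`. -/
def resW (f : (ℕ → Bool) → ℕ → Bool) (u : List Bool) : (ℕ → Bool) → ℕ → Bool :=
  fun w n => f (cat u w) (n + u.length)

/-- The periodic infinite word with period `u`. -/
def per (u : List Bool) : ℕ → Bool := fun n => u.getD (n % u.length) false

/-- Left-shift equivalence of infinite words: they share a common infinite tail. -/
def seq (u v : ℕ → Bool) : Prop := ∃ k l : ℕ, ∀ n, u (n + k) = v (n + l)

inductive St : Type
  | a | b | c
deriving DecidableEq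

instance : Fintype St := ⟨{.a, .b, .c}, by intro x; cases x <;> simp⟩

/-- Automaton 861. -/
def M : Mealy St where
  δ := fun q x => match q, x with
    | .a, false => .c | .a, true => .b
    | .b, false => .c | .b, true => .b
    | .c, false => .b | .c, true => .a
  τ := fun q x => match q with
    | .a => !x
    | .b => x
    | .c => x

theorem M_inv : ∀ q x, M.τ q (M.τ q x) = x := by decide

/-- The automorphism of the binary tree boundary defined by state `a`. -/
def a : Equiv.Perm (ℕ → Bool) := M.perm M_inv .a

/-- The automorphism of the binary tree boundary defined by state `b`. -/
def b : Equiv.Perm (ℕ → Bool) := M.perm M_inv .b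

/-- The automorphism of the binary tree boundary defined by state `c`. -/
def c : Equiv.Perm (ℕ → Bool) := M.perm M_inv .c

/-!
Reading `010` from `c` outputs `010` and returns to `c`, so `c` commutes with prefixing `010`.
Hence every power `cⁿ` is its own restriction along `(010)ᵏ`, and a nucleus would have to
contain all powers of `c`. These are pairwise distinct: on words `1 w₀ 1 w₁ 1 w₂ ⋯` the element
`c` acts as the affine map `w ↦ w + Sw + 1` over `𝔽₂`, whose `n`-th iterate moves the last
position where two words differ `n` places to the right, so it is not the identity for `n ≥ 1`.
-/

namespace Mealy

variable {S : Type} (M : Mealy S)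

theorem stateAt_cat_singleton_succ (q : S) (x : Bool) (w : ℕ → Bool) (n : ℕ) :
    M.stateAt q (cat [x] w) (n + 1) = M.stateAt (M.δ q x) w n := by
  induction n with
  | zero => rfl
  | succ n ih => exact congrArg₂ M.δ ih rfl

theorem act_cat_singleton (q : S) (x : Bool) (w : ℕ → Bool) :
    M.act q (cat [x] w) = cat [M.τ q x] (M.act (M.δ q x) w) := by
  funext n
  cases n with
  | zero => rfl
  | succ n => exact congrArg₂ M.τ (M.stateAt_cat_singleton_succ q x w n) rfl

end Mealy

theorem cat_add_length (u : List Bool) (w : ℕ → Bool) (n : ℕ) :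
    cat u w (n + u.length) = w n := by
  simp only [cat, List.getD_eq_default _ _ (Nat.le_add_left _ _), Nat.add_sub_cancel]

theorem cat_append (u v : List Bool) (w : ℕ → Bool) : cat (u ++ v) w = cat u (cat v w) := by
  funext n
  by_cases hn : n < u.length
  · simp only [cat, List.getD_append _ _ _ _ hn]
    exact (List.getD_eq_getElem _ _ hn).trans (List.getD_eq_getElem _ _ hn).symm
  · replace hn := not_lt.1 hn
    simp only [cat, List.getD_append_right _ _ _ _ hn, List.getD_eq_default _ _ hn,
      List.length_append, Nat.sub_add_eq]

theorem cat_flatten_replicate (u : List Bool) (j : ℕ) :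
    cat (List.replicate j u).flatten = (cat u)^[j] := by
  induction j with
  | zero => funext w n; simp [cat]
  | succ j ih =>
    funext w
    rw [List.replicate_succ, List.flatten_cons, cat_append, ih, Function.iterate_succ_apply']

theorem resW_eq_self_of_commute {f : (ℕ → Bool) → ℕ → Bool} {u : List Bool}
    (h : Function.Commute f (cat u)) : resW f u = f := by
  funext w n
  exact (congrFun (h w) _).trans (cat_add_length u (f w) n)

theorem not_exists_nucleus_of_commute_cat {G : Subgroup (Equiv.Perm (ℕ → Bool))}
    {g : Equiv.Perm (ℕ → Bool)} (hg : g ∈ G) (hord : ¬ IsOfFinOrder g) {u : List Bool}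
    (hu : u ≠ []) (hcomm : Function.Commute g (cat u)) :
    ¬ ∃ N : Finset (Equiv.Perm (ℕ → Bool)),
      ∀ h ∈ G, ∃ k : ℕ, ∀ v : List Bool, k ≤ v.length → ∃ m ∈ N, resW ⇑h v = ⇑m := by
  rintro ⟨N, hN⟩
  have hpow_mem : ∀ n : ℕ, g ^ n ∈ N := by
    intro n
    obtain ⟨k, hk⟩ := hN (g ^ n) (pow_mem hg n)
    have hlen : k ≤ (List.replicate k u).flatten.length := by
      simp only [List.length_flatten, List.map_replicate, List.sum_replicate, smul_eq_mul]
      exact Nat.le_mul_of_pos_right k (List.length_pos_of_ne_nil hu)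
    obtain ⟨m, hmN, hm⟩ := hk _ hlen
    have hcomm_pow : Function.Commute ⇑(g ^ n) (cat (List.replicate k u).flatten) := by
      rw [Equiv.Perm.coe_pow, cat_flatten_replicate]
      exact (hcomm.iterate_left n).iterate_right k
    rwa [Equiv.coe_fn_injective (((resW_eq_self_of_commute hcomm_pow).symm).trans hm)]
  refine hord (finite_powers.1 (N.finite_toSet.subset ?_))
  rintro _ ⟨n, rfl⟩
  exact hpow_mem n

theorem c_commute_cat_010 : Function.Commute ⇑c (cat [false, true, false]) := by
  intro w
  show M.act .c (cat ([false] ++ [true] ++ [false]) w) = cat ([false] ++ [true] ++ [false]) _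
  simp only [cat_append, Mealy.act_cat_singleton]
  rfl

theorem eq_of_eq_cat_unfold {ι : Type*} (head : ι → List Bool) (next : ι → ι)
    (hhead : ∀ i, head i ≠ []) {f g : ι → ℕ → Bool}
    (hf : ∀ i, f i = cat (head i) (f (next i))) (hg : ∀ i, g i = cat (head i) (g (next i))) :
    f = g := by
  suffices h : ∀ n i, f i n = g i n from funext fun i => funext fun n => h n i
  intro n
  induction n using Nat.strong_induction_on with
  | _ n ih =>
    intro i
    rw [hf, hg]
    by_cases hn : n < (head i).length
    · simp only [cat, List.getD_eq_getElem _ _ hn]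
    · obtain ⟨m, rfl⟩ := Nat.exists_eq_add_of_le (not_lt.1 hn)
      have hpos := List.length_pos_of_ne_nil (hhead i)
      rw [add_comm, cat_add_length, cat_add_length]
      exact ih m (by omega) (next i)

def padOnes (w : ℕ → Bool) : ℕ → Bool := fun n => if n % 2 = 0 then true else w (n / 2)

/-- The affine map `w ↦ w + Sw + 1` over `𝔽₂`, where `S` shifts by one and feeds in `p`. -/
def xorNotPrev (p : Bool) (w : ℕ → Bool) : ℕ → Bool
  | 0 => xor (w 0) !p
  | i + 1 => xor (w (i + 1)) !(w i)

theorem padOnes_eq_cat (w : ℕ → Bool) :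
    padOnes w = cat [true, w 0] (padOnes fun n => w (n + 1)) := by
  funext n
  rcases n with _ | _ | n
  · rfl
  · rfl
  · rw [show n + 1 + 1 = n + [true, w 0].length from rfl, cat_add_length]
    show (if (n + 2) % 2 = 0 then true else w ((n + 2) / 2)) = _
    simp only [padOnes, Nat.add_mod_right, Nat.add_div_right n two_pos]

theorem padOnes_injective : Function.Injective padOnes := by
  intro u v h
  funext i
  simpa [padOnes, Nat.mul_add_div] using congrFun h (2 * i + 1)

theorem xorNotPrev_succ (p : Bool) (w : ℕ → Bool) :
    (fun n => xorNotPrev p w (n + 1)) = xorNotPrev (w 0) fun n => w (n + 1) := by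
  funext n
  cases n <;> rfl

/-- From `b` or `c`, reading `1` leads to `b` or `a`, which fixes or flips the next letter. -/
theorem act_padOnes_eq_cat (p : Bool) (w : ℕ → Bool) :
    M.act (if p then .b else .c) (padOnes w) =
      cat [true, xor (w 0) !p] (M.act (if w 0 then .b else .c) (padOnes fun n => w (n + 1))) := by
  rw [padOnes_eq_cat, show [true, w 0] = [true] ++ [w 0] from rfl, cat_append,
    Mealy.act_cat_singleton, Mealy.act_cat_singleton, ← cat_append]
  generalize w 0 = x
  cases p <;> cases x <;> rfl

theorem padOnes_semiconj_c : Function.Semiconj padOnes (xorNotPrev false) ⇑c := by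
  have key := eq_of_eq_cat_unfold (fun i : Bool × (ℕ → Bool) => [true, xor (i.2 0) !i.1])
    (fun i => (i.2 0, fun n => i.2 (n + 1))) (fun _ => List.cons_ne_nil _ _)
    (f := fun i => padOnes (xorNotPrev i.1 i.2))
    (g := fun i => M.act (if i.1 then .b else .c) (padOnes i.2))
    (fun i => by rw [padOnes_eq_cat (xorNotPrev _ _), xorNotPrev_succ]; rfl)
    (fun i => act_padOnes_eq_cat i.1 i.2)
  exact fun w => congrFun key (false, w)

def LastDiffAt (u v : ℕ → Bool) (k : ℕ) : Prop := u k ≠ v k ∧ ∀ i, k < i → u i = v i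

theorem LastDiffAt.eq {u v : ℕ → Bool} {k l : ℕ} (hk : LastDiffAt u v k)
    (hl : LastDiffAt u v l) : k = l := by
  by_contra hne
  rcases Nat.lt_or_gt_of_ne hne with h | h
  · exact hl.1 (hk.2 l h)
  · exact hk.1 (hl.2 k h)

theorem LastDiffAt.map_xorNotPrev {u v : ℕ → Bool} {k : ℕ} (h : LastDiffAt u v k) (p : Bool) :
    LastDiffAt (xorNotPrev p u) (xorNotPrev p v) (k + 1) := by
  refine ⟨?_, fun i hi => ?_⟩
  · simpa [xorNotPrev, h.2 (k + 1) k.lt_succ_self] using h.1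
  · obtain ⟨i, rfl⟩ := Nat.exists_eq_add_one_of_ne_zero (by omega : i ≠ 0)
    simp only [xorNotPrev, h.2 (i + 1) (by omega), h.2 i (by omega)]

theorem LastDiffAt.iterate_map_xorNotPrev {u v : ℕ → Bool} {k : ℕ} (h : LastDiffAt u v k)
    (p : Bool) (n : ℕ) :
    LastDiffAt ((xorNotPrev p)^[n] u) ((xorNotPrev p)^[n] v) (k + n) := by
  induction n with
  | zero => exact h
  | succ n ih =>
    simp only [Function.iterate_succ_apply']
    exact ih.map_xorNotPrev p

theorem c_not_isOfFinOrder : ¬ IsOfFinOrder c := by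
  rw [isOfFinOrder_iff_pow_eq_one]
  rintro ⟨n, hn, hcn⟩
  have hid : ∀ w, (xorNotPrev false)^[n] w = w := fun w => padOnes_injective <| by
    rw [padOnes_semiconj_c.iterate_right n w, ← Equiv.Perm.coe_pow, hcn]
    rfl
  have h0 : LastDiffAt (fun i => decide (i = 0)) (fun _ => false) 0 :=
    ⟨by simp, fun i hi => by simp; omega⟩
  have hn0 := h0.iterate_map_xorNotPrev false n
  rw [hid, hid, zero_add] at hn0
  exact hn.ne' (hn0.eq h0)

/-- The automaton group of automaton 861 is non-contracting: `c(010) = 010`,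
`c|₀₁₀ = c`, `c` has infinite order, and hence no finite nucleus exists. -/
theorem automaton861_noncontracting :
    (∀ w : ℕ → Bool, c (cat [false, true, false] w) = cat [false, true, false] (c w)) ∧
    (∀ n : ℕ, 1 ≤ n → c ^ n ≠ 1) ∧
    ¬ ∃ N : Finset (Equiv.Perm (ℕ → Bool)),
      ∀ g ∈ Subgroup.closure ({a, b, c} : Set (Equiv.Perm (ℕ → Bool))),
        ∃ k : ℕ, ∀ u : List Bool, k ≤ u.length → ∃ m ∈ N, resW ⇑g u = ⇑m :=
  ⟨c_commute_cat_010,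
    fun n hn hcn => c_not_isOfFinOrder (isOfFinOrder_iff_pow_eq_one.2 ⟨n, hn, hcn⟩),
    not_exists_nucleus_of_commute_cat (Subgroup.subset_closure (by simp)) c_not_isOfFinOrder
      (List.cons_ne_nil _ _) c_commute_cat_010⟩

end Stmt6
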